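/- If f attains its absolute maximum at a point y ∈ ℝ that lies outside [−t/k, t/l] modulo 2π (i.e. no point of y + 2πℤ belongs to [−t/k, t/l]), then t = π/(k+l) and 2mπ/(k+l) − y lies in [−t/k, t/l] modulo 2π, where m is an inverse of l modulo k+l. -/

import Mathlib

open Real

/-- `f(x) = |r₁e^{−ikx} + r₂e^{it} + r₃e^{ilx}|²`. -/
noncomputable def fKL (r₁ r₂ r₃ t : ℝ) (k l : ℕ) (x : ℝ) : ℝ :=
  ‖(r₁ : ℂ) * Complex.exp (Complex.I * ((-(k : ℝ) * x : ℝ) : ℂ)) +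
    (r₂ : ℂ) * Complex.exp (Complex.I * (t : ℂ)) +
    (r₃ : ℂ) * Complex.exp (Complex.I * ((l * x : ℝ) : ℂ))‖ ^ 2

lemma cos_three_abs (a b c θ₁ θ₂ θ₃ : ℝ) :
    ‖(a : ℂ) * Complex.exp (Complex.I * (θ₁ : ℂ)) +
      (b : ℂ) * Complex.exp (Complex.I * (θ₂ : ℂ)) +
      (c : ℂ) * Complex.exp (Complex.I * (θ₃ : ℂ))‖ ^ 2 =
    a^2 + b^2 + c^2 + 2*a*b*Real.cos (θ₁ - θ₂) + 2*a*c*Real.cos (θ₁ - θ₃)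
      + 2*b*c*Real.cos (θ₂ - θ₃) := by
  have he : ∀ θ : ℝ, Complex.exp (Complex.I * (θ : ℂ)) =
      (Real.cos θ : ℂ) + (Real.sin θ : ℂ) * Complex.I := by
    intro θ
    rw [mul_comm, Complex.exp_mul_I, Complex.ofReal_cos, Complex.ofReal_sin]
  rw [he, he, he, Complex.sq_norm, Complex.normSq_apply]
  simp only [Complex.add_re, Complex.add_im, Complex.mul_re, Complex.mul_im,
    Complex.ofReal_re, Complex.ofReal_im, Complex.I_re, Complex.I_im,
    mul_one, mul_zero, zero_mul, mul_neg, sub_zero, zero_sub, add_zero, zero_add]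
  rw [Real.cos_sub, Real.cos_sub, Real.cos_sub]
  nlinarith [sin_sq_add_cos_sq θ₁, sin_sq_add_cos_sq θ₂, sin_sq_add_cos_sq θ₃,
    sq_nonneg (Real.sin θ₁), sq_nonneg (Real.cos θ₁)]

lemma fKL_eq (r₁ r₂ r₃ t : ℝ) (k l : ℕ) (x : ℝ) :
    fKL r₁ r₂ r₃ t k l x = r₁^2 + r₂^2 + r₃^2
      + 2*r₁*r₂ * Real.cos ((k:ℝ)*x + t) + 2*r₂*r₃ * Real.cos ((l:ℝ)*x - t)
      + 2*r₁*r₃ * Real.cos (((k:ℝ)+(l:ℝ))*x) := by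
  unfold fKL
  rw [cos_three_abs]
  rw [show -(k:ℝ)*x - t = -((k:ℝ)*x + t) by ring, Real.cos_neg,
      show -(k:ℝ)*x - (l:ℝ)*x = -((((k:ℝ)+(l:ℝ)))*x) by ring, Real.cos_neg,
      show t - (l:ℝ)*x = -((l:ℝ)*x - t) by ring, Real.cos_neg]
  ring

lemma round_close (X : ℝ) : |X - 2 * π * (round (X / (2 * π)) : ℤ)| ≤ π := by
  have h2π : (0:ℝ) < 2 * π := by positivity
  have h := abs_sub_round (X / (2 * π))
  have he : X - 2 * π * (round (X / (2 * π)) : ℤ) =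
      (2 * π) * (X / (2 * π) - (round (X / (2 * π)) : ℤ)) := by
    field_simp
  rw [he, abs_mul, abs_of_pos h2π]
  nlinarith [pi_pos]

lemma T_le_abs (T u : ℝ) (N : ℤ) (hT0 : 0 ≤ T) (hTπ : T ≤ π) (h : T = u + 2 * π * N) :
    T ≤ |u| := by
  rcases lt_trichotomy N 0 with hN | hN | hN
  · have hN' : (N : ℝ) ≤ -1 := by
      have : N ≤ -1 := by omega
      exact_mod_cast this
    rw [le_abs]; left
    nlinarith [pi_pos]
  · rw [hN] at h; simp at h; rw [le_abs]; left; linarith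
  · have hN' : (1:ℝ) ≤ (N : ℝ) := by
      have : 1 ≤ N := by omega
      exact_mod_cast this
    rw [le_abs]; right
    nlinarith [pi_pos]


set_option maxHeartbeats 2000000 in
theorem stmt11 (k l : ℕ) (hk : 0 < k) (hl : 0 < l) (hkl : Nat.Coprime k l)
    (r₁ r₂ r₃ : ℝ) (hr₁ : 0 < r₁) (hr₂ : 0 < r₂) (hr₃ : 0 < r₃)
    (t : ℝ) (ht : t ∈ Set.Icc 0 (π / (k + l)))
    (y : ℝ) (hy : ∀ z : ℝ, fKL r₁ r₂ r₃ t k l z ≤ fKL r₁ r₂ r₃ t k l y)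
    (hout : ¬ ∃ n : ℤ, y + 2 * π * n ∈ Set.Icc (-t / k) (t / l)) :
    t = π / (k + l) ∧
      ∀ m : ℤ, (m * l) % (k + l : ℤ) = 1 % (k + l : ℤ) →
        ∃ n : ℤ, 2 * m * π / (k + l) - y + 2 * π * n ∈ Set.Icc (-t / k) (t / l) := by
  obtain ⟨ht0, ht1⟩ := ht
  have hπ := Real.pi_pos
  have hK : (0:ℝ) < (k:ℝ) := by exact_mod_cast hk
  have hL : (0:ℝ) < (l:ℝ) := by exact_mod_cast hl
  have hKL : (0:ℝ) < (k:ℝ) + (l:ℝ) := by linarith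
  have htπ : ((k:ℝ)+(l:ℝ)) * t ≤ π := by
    rw [le_div_iff₀ hKL] at ht1; linarith
  set A := (k:ℝ) * y + t with hA
  set B := (l:ℝ) * y - t with hB
  set C := ((k:ℝ) + (l:ℝ)) * y with hC
  set a := round (A / (2*π)) with ha
  set b := round (B / (2*π)) with hb
  set c := round (C / (2*π)) with hc
  set dA := A - 2*π*(a:ℝ) with hdA
  set dB := B - 2*π*(b:ℝ) with hdB
  set dC := C - 2*π*(c:ℝ) with hdC
  have hdAπ : |dA| ≤ π := by rw [hdA, ha]; exact round_close A
  have hdBπ : |dB| ≤ π := by rw [hdB, hb]; exact round_close B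
  have hdCπ : |dC| ≤ π := by rw [hdC, hc]; exact round_close C
  have hcosA : Real.cos A = Real.cos |dA| := by
    rw [Real.cos_abs]
    conv_lhs => rw [show A = dA + (a:ℝ) * (2*π) by rw [hdA]; ring]
    rw [Real.cos_add_int_mul_two_pi]
  have hcosB : Real.cos B = Real.cos |dB| := by
    rw [Real.cos_abs]
    conv_lhs => rw [show B = dB + (b:ℝ) * (2*π) by rw [hdB]; ring]
    rw [Real.cos_add_int_mul_two_pi]
  have hcosC : Real.cos C = Real.cos |dC| := by
    rw [Real.cos_abs]
    conv_lhs => rw [show C = dC + (c:ℝ) * (2*π) by rw [hdC]; ring]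
    rw [Real.cos_add_int_mul_two_pi]
  have htnn : 0 ≤ ((k:ℝ)+(l:ℝ)) * t := by positivity
  -- the three key inequalities
  have K1 : ((k:ℝ)+(l:ℝ)) * t ≤ (l:ℝ) * |dA| + (k:ℝ) * |dB| := by
    have h := T_le_abs (((k:ℝ)+(l:ℝ)) * t) ((l:ℝ)*dA - (k:ℝ)*dB) ((l:ℤ)*a - (k:ℤ)*b)
      htnn htπ (by rw [hdA, hdB, hA, hB]; push_cast; ring)
    calc ((k:ℝ)+(l:ℝ)) * t ≤ |(l:ℝ)*dA - (k:ℝ)*dB| := h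
      _ ≤ |(l:ℝ)*dA| + |(k:ℝ)*dB| := abs_sub _ _
      _ = (l:ℝ) * |dA| + (k:ℝ) * |dB| := by
          rw [abs_mul, abs_mul, abs_of_pos hL, abs_of_pos hK]
  have K2 : ((k:ℝ)+(l:ℝ)) * t ≤ ((k:ℝ)+(l:ℝ)) * |dB| + (l:ℝ) * |dC| := by
    have h := T_le_abs (((k:ℝ)+(l:ℝ)) * t) ((l:ℝ)*dC - ((k:ℝ)+(l:ℝ))*dB)
      ((l:ℤ)*c - ((k:ℤ)+(l:ℤ))*b) htnn htπ
      (by rw [hdB, hdC, hB, hC]; push_cast; ring)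
    calc ((k:ℝ)+(l:ℝ)) * t ≤ |(l:ℝ)*dC - ((k:ℝ)+(l:ℝ))*dB| := h
      _ ≤ |(l:ℝ)*dC| + |((k:ℝ)+(l:ℝ))*dB| := abs_sub _ _
      _ = (l:ℝ) * |dC| + ((k:ℝ)+(l:ℝ)) * |dB| := by
          rw [abs_mul, abs_mul, abs_of_pos hL, abs_of_pos hKL]
      _ = ((k:ℝ)+(l:ℝ)) * |dB| + (l:ℝ) * |dC| := by ring
  have K3 : ((k:ℝ)+(l:ℝ)) * t ≤ ((k:ℝ)+(l:ℝ)) * |dA| + (k:ℝ) * |dC| := by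
    have h := T_le_abs (((k:ℝ)+(l:ℝ)) * t) (((k:ℝ)+(l:ℝ))*dA - (k:ℝ)*dC)
      (((k:ℤ)+(l:ℤ))*a - (k:ℤ)*c) htnn htπ
      (by rw [hdA, hdC, hA, hC]; push_cast; ring)
    calc ((k:ℝ)+(l:ℝ)) * t ≤ |((k:ℝ)+(l:ℝ))*dA - (k:ℝ)*dC| := h
      _ ≤ |((k:ℝ)+(l:ℝ))*dA| + |(k:ℝ)*dC| := abs_sub _ _
      _ = ((k:ℝ)+(l:ℝ)) * |dA| + (k:ℝ) * |dC| := by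
          rw [abs_mul, abs_mul, abs_of_pos hKL, abs_of_pos hK]
  -- choose the comparison point x₀ in the interval
  set x₀ := max (max (-t/(k:ℝ)) ((t - |dB|)/(l:ℝ))) (-|dC|/((k:ℝ)+(l:ℝ))) with hx₀
  have hx1 : -t/(k:ℝ) ≤ x₀ := le_trans (le_max_left _ _) (le_max_left _ _)
  have hx2 : (t - |dB|)/(l:ℝ) ≤ x₀ := le_trans (le_max_right _ _) (le_max_left _ _)
  have hx3 : -|dC|/((k:ℝ)+(l:ℝ)) ≤ x₀ := le_max_right _ _
  have hxu : x₀ ≤ t/(l:ℝ) := by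
    rw [hx₀]
    apply max_le (max_le ?_ ?_) ?_
    · rw [div_le_div_iff₀ hK hL]
      linarith [mul_nonneg ht0 hK.le, mul_nonneg ht0 hL.le]
    · rw [div_le_div_iff₀ hL hL]
      linarith [mul_nonneg (abs_nonneg dB) hL.le]
    · rw [div_le_div_iff₀ hKL hL]
      linarith [mul_nonneg (abs_nonneg dC) hL.le, mul_nonneg ht0 hK.le, mul_nonneg ht0 hL.le]
  have hxv : x₀ ≤ (|dA| - t)/(k:ℝ) := by
    rw [hx₀]
    apply max_le (max_le ?_ ?_) ?_
    · rw [div_le_div_iff₀ hK hK]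
      linarith [mul_nonneg (abs_nonneg dA) hK.le]
    · rw [div_le_div_iff₀ hL hK]
      linarith [K1]
    · rw [div_le_div_iff₀ hKL hK]
      linarith [K3]
  have hxw : x₀ ≤ |dC|/((k:ℝ)+(l:ℝ)) := by
    rw [hx₀]
    apply max_le (max_le ?_ ?_) ?_
    · rw [div_le_div_iff₀ hK hKL]
      linarith [mul_nonneg (abs_nonneg dC) hK.le, mul_nonneg ht0 hK.le, mul_nonneg ht0 hL.le]
    · rw [div_le_div_iff₀ hL hKL]
      linarith [K2]
    · rw [div_le_div_iff₀ hKL hKL]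
      linarith [mul_nonneg (abs_nonneg dC) hKL.le]
  -- linear versions of the bounds
  have hb1 : -t ≤ (k:ℝ) * x₀ := by rw [div_le_iff₀ hK] at hx1; linarith
  have hb2 : t - |dB| ≤ (l:ℝ) * x₀ := by rw [div_le_iff₀ hL] at hx2; linarith
  have hb3 : -|dC| ≤ ((k:ℝ)+(l:ℝ)) * x₀ := by rw [div_le_iff₀ hKL] at hx3; linarith
  have hb4 : (l:ℝ) * x₀ ≤ t := by rw [le_div_iff₀ hL] at hxu; linarith
  have hb5 : (k:ℝ) * x₀ ≤ |dA| - t := by rw [le_div_iff₀ hK] at hxv; linarith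
  have hb6 : ((k:ℝ)+(l:ℝ)) * x₀ ≤ |dC| := by rw [le_div_iff₀ hKL] at hxw; linarith
  -- cosine comparisons
  have hca : Real.cos A ≤ Real.cos ((k:ℝ)*x₀ + t) := by
    rw [hcosA]
    exact Real.cos_le_cos_of_nonneg_of_le_pi (by linarith) hdAπ (by linarith)
  have hcb : Real.cos B ≤ Real.cos ((l:ℝ)*x₀ - t) := by
    rw [hcosB, show (l:ℝ)*x₀ - t = -(t - (l:ℝ)*x₀) by ring, Real.cos_neg]
    exact Real.cos_le_cos_of_nonneg_of_le_pi (by linarith) hdBπ (by linarith)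
  have hcc : Real.cos C ≤ Real.cos (((k:ℝ)+(l:ℝ))*x₀) := by
    rw [hcosC, ← Real.cos_abs (((k:ℝ)+(l:ℝ))*x₀)]
    exact Real.cos_le_cos_of_nonneg_of_le_pi (abs_nonneg _) hdCπ
      (abs_le.mpr ⟨by linarith, hb6⟩)
  -- maximality forces equalities
  have hmax := hy x₀
  rw [fKL_eq, fKL_eq] at hmax
  rw [← hA, ← hB, ← hC] at hmax
  have hP : (0:ℝ) < 2*r₁*r₂ := by positivity
  have hQ : (0:ℝ) < 2*r₂*r₃ := by positivity
  have hS : (0:ℝ) < 2*r₁*r₃ := by positivity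
  have h2 : 0 ≤ 2*r₂*r₃ * (Real.cos ((l:ℝ)*x₀-t) - Real.cos B) :=
    mul_nonneg hQ.le (by linarith)
  have h1 : 0 ≤ 2*r₁*r₂ * (Real.cos ((k:ℝ)*x₀+t) - Real.cos A) :=
    mul_nonneg hP.le (by linarith)
  have h3 : 0 ≤ 2*r₁*r₃ * (Real.cos (((k:ℝ)+(l:ℝ))*x₀) - Real.cos C) :=
    mul_nonneg hS.le (by linarith)
  have e1 : Real.cos ((k:ℝ)*x₀ + t) = Real.cos A := by
    refine le_antisymm ?_ hca
    by_contra hcon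
    push_neg at hcon
    have h1' : 0 < 2*r₁*r₂ * (Real.cos ((k:ℝ)*x₀+t) - Real.cos A) :=
      mul_pos hP (by linarith)
    linarith [hmax, h1', h2, h3]
  have e2 : Real.cos ((l:ℝ)*x₀ - t) = Real.cos B := by
    refine le_antisymm ?_ hcb
    by_contra hcon
    push_neg at hcon
    have h2' : 0 < 2*r₂*r₃ * (Real.cos ((l:ℝ)*x₀-t) - Real.cos B) :=
      mul_pos hQ (by linarith)
    linarith [hmax, h1, h2', h3]
  have e3 : Real.cos (((k:ℝ)+(l:ℝ))*x₀) = Real.cos C := by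
    refine le_antisymm ?_ hcc
    by_contra hcon
    push_neg at hcon
    have h3' : 0 < 2*r₁*r₃ * (Real.cos (((k:ℝ)+(l:ℝ))*x₀) - Real.cos C) :=
      mul_pos hS (by linarith)
    linarith [hmax, h1, h2, h3']
  -- pin down the absolute values
  have hAnn : (0:ℝ) ≤ (k:ℝ)*x₀ + t := by linarith
  have hBnn : (0:ℝ) ≤ t - (l:ℝ)*x₀ := by linarith
  have hAbar : |dA| = (k:ℝ)*x₀ + t := by
    refine Real.injOn_cos ⟨abs_nonneg _, hdAπ⟩ ⟨hAnn, by linarith⟩ ?_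
    rw [← hcosA]; exact e1.symm
  have hBbar : |dB| = t - (l:ℝ)*x₀ := by
    refine Real.injOn_cos ⟨abs_nonneg _, hdBπ⟩ ⟨hBnn, by linarith⟩ ?_
    rw [← hcosB, show t - (l:ℝ)*x₀ = -((l:ℝ)*x₀ - t) by ring, Real.cos_neg]
    exact e2.symm
  have hCbar : |dC| = |((k:ℝ)+(l:ℝ))*x₀| := by
    have habs : |((k:ℝ)+(l:ℝ))*x₀| ≤ π := le_trans (abs_le.mpr ⟨by linarith, hb6⟩) hdCπ
    refine Real.injOn_cos ⟨abs_nonneg _, hdCπ⟩ ⟨abs_nonneg _, habs⟩ ?_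
    rw [← hcosC, Real.cos_abs]
    exact e3.symm
  -- auxiliary closing lemmas
  have contra : ∀ p q : ℤ, (k:ℝ)*(y - x₀) = 2*π*(p:ℝ) → (l:ℝ)*(y - x₀) = 2*π*(q:ℝ) → False := by
    intro p q hp hq
    have hcop : IsCoprime (k:ℤ) (l:ℤ) := Int.isCoprime_iff_gcd_eq_one.mpr (by
      rw [Int.gcd_natCast_natCast]; exact hkl)
    obtain ⟨u, v, huv⟩ := hcop
    have huv' : (u:ℝ)*(k:ℝ) + (v:ℝ)*(l:ℝ) = 1 := by exact_mod_cast huv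
    have hyx : y - x₀ = 2*π*(((u*p + v*q : ℤ)):ℝ) := by
      push_cast
      linear_combination (-(y - x₀)) * huv' + (u:ℝ) * hp + (v:ℝ) * hq
    apply hout
    refine ⟨-(u*p + v*q), Set.mem_Icc.mpr ⟨?_, ?_⟩⟩
    · push_cast
      push_cast at hyx
      linarith [hx1]
    · push_cast
      push_cast at hyx
      linarith [hxu]
  have main : ∀ p q : ℤ, (k:ℝ)*(y + x₀) = -(2*t) + 2*π*(p:ℝ) →
      (l:ℝ)*(y + x₀) = 2*t + 2*π*(q:ℝ) →
      (t = π / (k + l) ∧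
        ∀ m : ℤ, (m * l) % (k + l : ℤ) = 1 % (k + l : ℤ) →
          ∃ n : ℤ, 2 * m * π / (k + l) - y + 2 * π * n ∈ Set.Icc (-t / k) (t / l)) := by
    intro p q hp hq
    have hsum : ((k:ℝ)+(l:ℝ))*(y+x₀) = 2*π*((p:ℝ)+(q:ℝ)) := by linarith
    obtain ⟨W, hW⟩ : ∃ W : ℤ, W = (l:ℤ)*(p+q) - ((k:ℤ)+(l:ℤ))*q := ⟨_, rfl⟩
    have hw : ((k:ℝ)+(l:ℝ))*t = π * (W:ℝ) := by
      rw [hW]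
      push_cast
      linear_combination (-(((k:ℝ)+(l:ℝ))/2)) * hq + ((l:ℝ)/2) * hsum
    have hw0 : (0:ℤ) ≤ W := by
      by_contra hneg
      push_neg at hneg
      have h1 : W ≤ -1 := by omega
      have h2 : (W:ℝ) ≤ -1 := by exact_mod_cast h1
      have h3 : π * (W:ℝ) ≤ π * (-1) := mul_le_mul_of_nonneg_left h2 hπ.le
      linarith [htnn, hw]
    have hw1 : W ≤ 1 := by
      by_contra hneg
      push_neg at hneg
      have h1 : (2:ℤ) ≤ W := by omega
      have h2 : (2:ℝ) ≤ (W:ℝ) := by exact_mod_cast h1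
      have h3 : π * (2:ℝ) ≤ π * (W:ℝ) := mul_le_mul_of_nonneg_left h2 hπ.le
      linarith [htπ, hw]
    have hw01 : W = 0 ∨ W = 1 := by omega
    rcases hw01 with hw' | hw'
    · -- W = 0 forces t = 0, x₀ = 0, and then y ≡ 0 lies in the interval
      exfalso
      have ht00 : t = 0 := by
        rw [hw'] at hw
        push_cast at hw
        rcases mul_eq_zero.mp (by linarith [hw] : ((k:ℝ)+(l:ℝ))*t = 0) with h | h
        · linarith
        · exact h
      have hx0le : x₀ ≤ 0 := by
        by_contra hpos
        push_neg at hpos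
        have := mul_pos hL hpos
        rw [ht00] at hb4
        linarith
      have hx0ge : 0 ≤ x₀ := by
        by_contra hnegx
        push_neg at hnegx
        have := mul_pos hK (neg_pos.mpr hnegx)
        rw [ht00] at hb1
        linarith
      have hx00 : x₀ = 0 := le_antisymm hx0le hx0ge
      refine contra p q ?_ ?_
      · rw [hx00] at hp ⊢
        rw [ht00] at hp
        linear_combination hp
      · rw [hx00] at hq ⊢
        rw [ht00] at hq
        linear_combination hq
    · -- W = 1 : t = π/(k+l) and the reflected point is in the interval
      rw [hw'] at hw
      push_cast at hw
      have ht' : t = π / ((k:ℝ) + (l:ℝ)) := by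
        rw [eq_div_iff (ne_of_gt hKL)]
        linarith
      constructor
      · exact_mod_cast ht'
      intro m hm
      have hwz : (l:ℤ)*(p+q) - ((k:ℤ)+(l:ℤ))*q = 1 := by rw [← hW, hw']
      have hd1 : ((k:ℤ)+(l:ℤ)) ∣ (1 - m*(l:ℤ)) := Int.ModEq.dvd hm
      have hd2 : ((k:ℤ)+(l:ℤ)) ∣ ((l:ℤ)*(p+q) - 1) := ⟨q, by linear_combination hwz⟩
      have hd3 : ((k:ℤ)+(l:ℤ)) ∣ ((l:ℤ)*(m - (p+q))) := by
        have hre : (l:ℤ)*(m - (p+q)) = -(1 - m*(l:ℤ)) - ((l:ℤ)*(p+q) - 1) := by ring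
        rw [hre]
        exact dvd_sub (dvd_neg.mpr hd1) hd2
      have hcop2 : IsCoprime ((k:ℤ)+(l:ℤ)) (l:ℤ) := by
        have hnat : Nat.Coprime (k+l) l := Nat.coprime_add_self_left.mpr hkl
        have hint : IsCoprime ((k+l : ℕ) : ℤ) ((l : ℕ) : ℤ) :=
          Int.isCoprime_iff_gcd_eq_one.mpr (by rw [Int.gcd_natCast_natCast]; exact hnat)
        push_cast at hint
        exact hint
      obtain ⟨s, hs⟩ := hcop2.dvd_of_dvd_mul_left hd3
      refine ⟨-s, ?_⟩
      have hmre : (m:ℝ) = (p:ℝ) + (q:ℝ) + ((k:ℝ)+(l:ℝ))*(s:ℝ) := by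
        have : m = (p+q) + ((k:ℤ)+(l:ℤ))*s := by linear_combination hs
        exact_mod_cast this
      have hexp : 2 * (m:ℝ) * π / ((k:ℝ) + (l:ℝ)) - y + 2 * π * ((-s : ℤ):ℝ) = x₀ := by
        field_simp
        push_cast
        linear_combination 2*π*hmre - hsum
      rw [Set.mem_Icc]
      constructor
      · push_cast
        push_cast at hexp
        linarith [hx1]
      · push_cast
        push_cast at hexp
        linarith [hxu]
  -- the sign case analysis
  rcases (abs_eq hAnn).mp hAbar with hA1 | hA1 <;>
    rcases (abs_eq hBnn).mp hBbar with hB1 | hB1 <;>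
    rw [hdA, hA] at hA1 <;> rw [hdB, hB] at hB1
  · -- dA = kx₀+t (E1), dB = t-lx₀ (E2')
    rcases abs_eq_abs.mp hCbar with hC1 | hC1 <;> rw [hdC, hC] at hC1
    · exact (contra a (c - a) (by linear_combination hA1)
        (by push_cast; linear_combination hC1 - hA1)).elim
    · exact main (c - b) b (by push_cast; linear_combination hC1 - hB1)
        (by linear_combination hB1)
  · -- dA = kx₀+t (E1), dB = -(t-lx₀) (E2)
    exact (contra a b (by linear_combination hA1) (by linear_combination hB1)).elim
  · -- dA = -(kx₀+t) (E1'), dB = t-lx₀ (E2')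
    exact main a b (by linear_combination hA1) (by linear_combination hB1)
  · -- dA = -(kx₀+t) (E1'), dB = -(t-lx₀) (E2)
    rcases abs_eq_abs.mp hCbar with hC1 | hC1 <;> rw [hdC, hC] at hC1
    · exact (contra (c - b) b (by push_cast; linear_combination hC1 - hB1)
        (by linear_combination hB1)).elim
    · exact main a (c - a) (by linear_combination hA1)
        (by push_cast; linear_combination hC1 - hA1)
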